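/- arXiv:math/0612197 — 2 statements merged into one kernel-verified Lean document; each statement's English description precedes it below -/
import Mathlib

section
/- A function g : ℝ → X is almost periodic in the sense of Bohr if and only if the set of translates {g(· + t) : t ∈ ℝ} is precompact (totally bounded) in BUC(ℝ,X) with the sup-norm. -/
open Set

def APSet {X : Type*} [NormedAddCommGroup X] (g : ℝ → X) (ε : ℝ) : Set ℝ :=
  {τ | ∀ t, ‖g (t + τ) - g t‖ ≤ ε}

def RelDense (S : Set ℝ) : Prop :=
  ∃ l > (0:ℝ), ∀ a : ℝ, ∃ τ ∈ S, τ ∈ Icc a (a + l)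

/-- Uniform continuity from almost periodicity. -/
lemma ucont_of_ap {X : Type*} [NormedAddCommGroup X] (g : ℝ → X) (hgc : Continuous g)
    (h : ∀ ε > (0:ℝ), RelDense (APSet g ε)) {η : ℝ} (hη : 0 < η) :
    ∃ δ > (0:ℝ), δ ≤ 1 ∧ ∀ u v : ℝ, |u - v| ≤ δ → ‖g u - g v‖ ≤ η := by
  obtain ⟨l, hl, hrel⟩ := h (η/3) (by positivity)
  have hK : IsCompact (Icc (-1 : ℝ) (l+1)) := isCompact_Icc
  have hUC := hK.uniformContinuousOn_of_continuous hgc.continuousOn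
  rw [Metric.uniformContinuousOn_iff] at hUC
  obtain ⟨δ₀, hδ₀, hUC⟩ := hUC (η/3) (by positivity)
  refine ⟨min (δ₀/2) 1, by positivity, min_le_right _ _, fun u v huv => ?_⟩
  obtain ⟨τ, hτAP, hτmem⟩ := hrel (-u)
  have hu1 : u + τ ∈ Icc (-1 : ℝ) (l+1) := by
    constructor <;> [nlinarith [hτmem.1, hl]; nlinarith [hτmem.2]]
  have hv1 : v + τ ∈ Icc (-1 : ℝ) (l+1) := by
    have h1 : |u - v| ≤ 1 := le_trans huv (min_le_right _ _)
    rw [abs_le] at h1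
    constructor <;> [nlinarith [hτmem.1, hl]; nlinarith [hτmem.2]]
  have hmid : ‖g (u + τ) - g (v + τ)‖ ≤ η/3 := by
    have hd : dist (u + τ) (v + τ) < δ₀ := by
      rw [Real.dist_eq]
      have : |u + τ - (v + τ)| = |u - v| := by ring_nf
      rw [this]
      calc |u - v| ≤ min (δ₀/2) 1 := huv
        _ ≤ δ₀/2 := min_le_left _ _
        _ < δ₀ := by linarith
    have := hUC _ hu1 _ hv1 hd
    rw [dist_eq_norm] at this
    linarith
  have h1 : ‖g (u + τ) - g u‖ ≤ η/3 := hτAP u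
  have h2 : ‖g (v + τ) - g v‖ ≤ η/3 := hτAP v
  calc ‖g u - g v‖ = ‖(g u - g (u+τ)) + (g (u+τ) - g (v+τ)) + (g (v+τ) - g v)‖ := by
        congr 1; abel
    _ ≤ ‖g u - g (u+τ)‖ + ‖g (u+τ) - g (v+τ)‖ + ‖g (v+τ) - g v‖ := by
        refine le_trans (norm_add_le _ _) ?_
        gcongr
        exact norm_add_le _ _
    _ ≤ η/3 + η/3 + η/3 := by
        rw [norm_sub_rev (g u)]
        gcongr
    _ = η := by ring

/-- Bochner's criterion: a continuous `g : ℝ → X` is Bohr almost periodic iff the set of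
translates `{g(·+t) : t ∈ ℝ}` is totally bounded in the sup-norm of `BUC(ℝ,X)`:
for every `ε > 0` there are finitely many translates that are `ε`-sup-close to all of them. -/
theorem stmt8 {X : Type*} [NormedAddCommGroup X] (g : ℝ → X) (hgc : Continuous g) :
    (∀ ε > (0:ℝ), RelDense (APSet g ε)) ↔
      (∀ ε > (0:ℝ), ∃ F : Finset ℝ, ∀ t : ℝ, ∃ τ ∈ F,
        ∀ s : ℝ, ‖g (s + t) - g (s + τ)‖ ≤ ε) := by
  constructor
  · -- Bohr a.p. → totally bounded translates
    intro h ε hε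
    obtain ⟨l, hl, hrel⟩ := h (ε/3) (by positivity)
    obtain ⟨δ, hδ, hδ1, hUC⟩ := ucont_of_ap g hgc h (show (0:ℝ) < ε/3 by positivity)
    set N := ⌈l/δ⌉₊ with hN
    refine ⟨(Finset.range (N+1)).image (fun k : ℕ => (k:ℝ) * δ), fun t => ?_⟩
    obtain ⟨τ, hτAP, hτmem⟩ := hrel (-t)
    set t' := t + τ with ht'
    have ht'0 : 0 ≤ t' := by have := hτmem.1; simp [ht']; linarith
    have ht'l : t' ≤ l := by have := hτmem.2; simp [ht']; linarith
    set k := ⌊t'/δ⌋₊ with hk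
    have hkN : k ≤ N := by
      calc k ≤ ⌊l/δ⌋₊ := Nat.floor_le_floor (by gcongr)
        _ ≤ N := Nat.floor_le_ceil _
    refine ⟨(k:ℝ) * δ, Finset.mem_image.2 ⟨k, Finset.mem_range.2 (Nat.lt_succ_of_le hkN), rfl⟩,
      fun s => ?_⟩
    have hkle : (k:ℝ) * δ ≤ t' := by
      have := Nat.floor_le (show (0:ℝ) ≤ t'/δ by positivity)
      calc (k:ℝ) * δ ≤ (t'/δ) * δ := by gcongr
        _ = t' := by field_simp
    have hklt : t' < ((k:ℝ)+1) * δ := by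
      have := Nat.lt_floor_add_one (t'/δ)
      calc t' = (t'/δ) * δ := by field_simp
        _ < ((k:ℝ)+1) * δ := by gcongr
    have hnear : |t' - (k:ℝ)*δ| ≤ δ := by
      rw [abs_le]; constructor <;> nlinarith
    have h1 : ‖g (s + t) - g (s + t')‖ ≤ ε/3 := by
      have := hτAP (s + t)
      rw [norm_sub_rev] at this
      have heq : s + t + τ = s + t' := by rw [ht']; ring
      rw [heq] at this; exact this
    have h2 : ‖g (s + t') - g (s + (k:ℝ)*δ)‖ ≤ ε/3 := by
      apply hUC
      have : s + t' - (s + (k:ℝ)*δ) = t' - (k:ℝ)*δ := by ring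
      rw [this]; exact hnear
    calc ‖g (s + t) - g (s + (k:ℝ)*δ)‖
        = ‖(g (s+t) - g (s+t')) + (g (s+t') - g (s + (k:ℝ)*δ))‖ := by congr 1; abel
      _ ≤ ‖g (s+t) - g (s+t')‖ + ‖g (s+t') - g (s + (k:ℝ)*δ)‖ := norm_add_le _ _
      _ ≤ ε/3 + ε/3 := by gcongr
      _ ≤ ε := by linarith
  · -- totally bounded translates → Bohr a.p.
    intro h ε hε
    obtain ⟨F, hF⟩ := h ε hε
    have hFne : ∃ τ₀, τ₀ ∈ F := by obtain ⟨τ, hτ, _⟩ := hF 0; exact ⟨τ, hτ⟩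
    obtain ⟨M, hM⟩ := Finset.exists_le (F.image (fun τ => |τ|))
    have hM' : ∀ τ ∈ F, |τ| ≤ M := fun τ hτ =>
      hM _ (Finset.mem_image.2 ⟨τ, hτ, rfl⟩)
    have hM0 : 0 ≤ M := by
      obtain ⟨τ₀, hτ₀⟩ := hFne
      exact le_trans (abs_nonneg _) (hM' _ hτ₀)
    refine ⟨2*M + 1, by linarith, fun a => ?_⟩
    obtain ⟨τ, hτF, hτ⟩ := hF (a + M)
    refine ⟨a + M - τ, fun s => ?_, ?_⟩
    · have := hτ (s - τ)
      have he1 : s - τ + (a + M) = s + (a + M - τ) := by ring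
      have he2 : s - τ + τ = s := by ring
      rw [he1, he2] at this
      exact this
    · have := hM' τ hτF
      rw [abs_le] at this
      constructor <;> [linarith [this.2]; linarith [this.1]]
end

section
/- Convolution characterization stability: if gₙ ∈ BUC(ℝ,X) with Beurling spectrum sp(gₙ) ⊆ Λ for all n and gₙ → g uniformly on ℝ, then sp(g) ⊆ closure(Λ). -/
/-!
Suppose `ξ ∈ sp(g)` lies at distance `> ε` from `Λ`, and pick `φ ∈ L¹` with `φ̃` supported in
`(ξ - ε/2, ξ + ε/2)` and `φ * g ≠ 0`. The compact ball `K = [ξ - ε/2, ξ + ε/2]` misses every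
`sp(gₙ)`, so it is covered by finitely many intervals whose spectral pieces are annihilated by
`gₙ`. A smooth partition of unity `∑ χᵢ = 1` on `K` splits `φ` as `∑ φ * ρᵢ` plus a remainder with
vanishing Fourier transform, where `ρ̃ᵢ = χᵢ`; hence `φ * gₙ = 0` for all `n`. Uniform convergence
gives `φ * gₙ → φ * g` pointwise, so `φ * g = 0`, a contradiction.
-/

open Set Filter Topology Complex MeasureTheory

def BUCp {X : Type*} [NormedAddCommGroup X] (g : ℝ → X) : Prop :=
  UniformContinuous g ∧ ∃ C, ∀ t, ‖g t‖ ≤ C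

/-- The Fourier transform `φ̃(η) = ∫ e^{-iηt} φ(t) dt`. -/
noncomputable def FT (φ : ℝ → ℂ) : ℝ → ℂ :=
  fun η => ∫ t : ℝ, Complex.exp (-(Complex.I * η * t)) * φ t

def BeurlingSp {X : Type*} [NormedAddCommGroup X] [NormedSpace ℂ X] (g : ℝ → X) : Set ℝ :=
  {ξ | ∀ ε > (0:ℝ), ∃ φ : ℝ → ℂ, Integrable φ ∧
    Function.support (FT φ) ⊆ Ioo (ξ - ε) (ξ + ε) ∧
    (fun t => ∫ s : ℝ, φ s • g (t - s)) ≠ 0}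

open Real FourierTransform Convolution ContinuousLinearMap
open scoped ContDiff Manifold

lemma FT_apply_eq_fourier (φ : ℝ → ℂ) (η : ℝ) : FT φ η = 𝓕 φ (η / (2 * π)) := by
  rw [Real.fourier_real_eq_integral_exp_smul, FT]
  congr 1 with t
  rw [smul_eq_mul]
  congr 2
  push_cast
  field_simp

lemma FT_convolution {φ ρ : ℝ → ℂ} (hφ : Integrable φ) (hρ : Integrable ρ) (η : ℝ) :
    FT (φ ⋆[mul ℂ ℂ] ρ) η = FT φ η * FT ρ η := by
  simp only [FT_apply_eq_fourier, Real.fourier_mul_convolution_eq hφ hρ]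

lemma exists_integrable_FT_eq {χ : ℝ → ℂ} (hχ : ContDiff ℝ ∞ χ) (hcs : HasCompactSupport χ) :
    ∃ ρ : ℝ → ℂ, Integrable ρ ∧ FT ρ = χ := by
  have h2π : (2 * π) ≠ 0 := by positivity
  let ψ : SchwartzMap ℝ ℂ := HasCompactSupport.toSchwartzMap (f := fun ξ => χ (2 * π * ξ))
    (hcs.comp_isClosedEmbedding (Homeomorph.mulLeft₀ _ h2π).isClosedEmbedding)
    (hχ.comp (contDiff_const.mul contDiff_id))
  refine ⟨(𝓕⁻ ψ : SchwartzMap ℝ ℂ), (𝓕⁻ ψ).integrable, funext fun η => ?_⟩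
  rw [FT_apply_eq_fourier, ← SchwartzMap.fourier_coe, FourierTransform.fourier_fourierInv_eq]
  simp only [HasCompactSupport.toSchwartzMap_toFun, ψ]
  congr 1
  field_simp

lemma integrable_exp_mul {φ : ℝ → ℂ} (hφ : Integrable φ) (η : ℝ) :
    Integrable fun t : ℝ => Complex.exp (-(Complex.I * η * t)) * φ t :=
  hφ.bdd_mul (c := 1) (by fun_prop) (ae_of_all _ fun t => by simp [Complex.norm_exp])

lemma FT_sub {φ ψ : ℝ → ℂ} (hφ : Integrable φ) (hψ : Integrable ψ) (η : ℝ) :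
    FT (φ - ψ) η = FT φ η - FT ψ η := by
  simp only [FT, Pi.sub_apply, mul_sub]
  exact integral_sub (integrable_exp_mul hφ η) (integrable_exp_mul hψ η)

lemma FT_finset_sum {ι : Type*} (s : Finset ι) {φ : ι → ℝ → ℂ} (hφ : ∀ i ∈ s, Integrable (φ i))
    (η : ℝ) : FT (∑ i ∈ s, φ i) η = ∑ i ∈ s, FT (φ i) η := by
  simp only [FT, Finset.sum_apply, Finset.mul_sum]
  exact integral_finsetSum s fun i hi => integrable_exp_mul (hφ i hi) η

lemma exists_contDiff_partition_of_unity {ι : Type*} [Fintype ι] {K : Set ℝ} (hK : IsClosed K)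
    {U : ι → Set ℝ} (hU : ∀ i, IsOpen (U i)) (hKU : K ⊆ ⋃ i, U i) :
    ∃ χ : ι → ℝ → ℝ, (∀ i, ContDiff ℝ ∞ (χ i)) ∧ (∀ i, tsupport (χ i) ⊆ U i) ∧
      ∀ x ∈ K, ∑ i, χ i x = 1 := by
  obtain ⟨f, hf⟩ := SmoothPartitionOfUnity.exists_isSubordinate 𝓘(ℝ, ℝ) hK U hU hKU
  refine ⟨fun i => f i, fun i => contMDiff_iff_contDiff.1 (f i).contMDiff, hf, fun x hx => ?_⟩
  rw [← finsum_eq_sum_of_fintype]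
  exact f.sum_eq_one hx

section Convolution

variable {X : Type*} [NormedAddCommGroup X] [NormedSpace ℂ X]

def convAnnihilator (h : ℝ → X) : Submodule ℂ (ℝ → ℂ) where
  carrier := {φ | ConvolutionExists φ h (lsmul ℂ ℂ) volume ∧ φ ⋆[lsmul ℂ ℂ] h = 0}
  zero_mem' := by
    refine ⟨fun t => ?_, ?_⟩
    · simp [ConvolutionExistsAt]
    · ext t; simp [convolution]
  add_mem' := by
    rintro φ ψ ⟨hφ, hφ0⟩ ⟨hψ, hψ0⟩
    refine ⟨fun t => ?_, by rw [hφ.add_distrib hψ, hφ0, hψ0, add_zero]⟩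
    simp only [ConvolutionExistsAt, Pi.add_apply, map_add, add_apply]
    exact (hφ t).add (hψ t)
  smul_mem' := by
    rintro c φ ⟨hφ, hφ0⟩
    refine ⟨fun t => ?_, by rw [smul_convolution, hφ0, smul_zero]⟩
    simp only [ConvolutionExistsAt, Pi.smul_apply, map_smul, smul_apply]
    exact (hφ t).smul c

lemma convolutionExists_of_bounded {φ : ℝ → ℂ} (hφ : Integrable φ) {h : ℝ → X} (hh : Continuous h)
    {C : ℝ} (hC : ∀ t, ‖h t‖ ≤ C) : ConvolutionExists φ h (lsmul ℂ ℂ) volume := fun t =>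
  hφ.smul_bdd C (by fun_prop) (ae_of_all _ fun s => hC (t - s))

lemma exists_annihilated_nbhd_of_notMem_beurlingSp {h : ℝ → X} (hh : Continuous h) {C : ℝ}
    (hC : ∀ t, ‖h t‖ ≤ C) {ξ : ℝ} (hξ : ξ ∉ BeurlingSp h) :
    ∃ δ > 0, ∀ φ : ℝ → ℂ, Integrable φ → Function.support (FT φ) ⊆ Ioo (ξ - δ) (ξ + δ) →
      φ ∈ convAnnihilator h := by
  simp only [BeurlingSp, mem_ofPred_eq, not_forall, not_exists, not_and, not_not] at hξ
  obtain ⟨δ, hδ, hann⟩ := hξ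
  exact ⟨δ, hδ, fun φ hφ hsupp => ⟨convolutionExists_of_bounded hφ hh hC, hann φ hφ hsupp⟩⟩

theorem mem_convAnnihilator_of_support_FT_subset {h : ℝ → X} (hh : Continuous h) {C : ℝ}
    (hC : ∀ t, ‖h t‖ ≤ C) {K : Set ℝ} (hK : IsCompact K) (hKne : K.Nonempty)
    (hKsp : Disjoint K (BeurlingSp h)) {φ : ℝ → ℂ} (hφ : Integrable φ)
    (hsupp : Function.support (FT φ) ⊆ K) : φ ∈ convAnnihilator h := by
  choose δ hδ hann using fun k : K =>
    exists_annihilated_nbhd_of_notMem_beurlingSp hh hC (hKsp.notMem_of_mem_left k.2)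
  set U : K → Set ℝ := fun k => Ioo (k - δ k) (k + δ k)
  obtain ⟨T, hT⟩ := hK.elim_finite_subcover U (fun _ => isOpen_Ioo) fun x hx =>
    mem_iUnion.2 ⟨⟨x, hx⟩, by simp [U, hδ]⟩
  obtain ⟨χ, hχ, hχU, hχK⟩ := exists_contDiff_partition_of_unity (ι := T) hK.isClosed
    (U := fun i => U i) (fun _ => isOpen_Ioo) (by simpa [Set.iUnion_subtype] using hT)
  choose ρ hρ hFTρ using fun i : T => exists_integrable_FT_eq (χ := fun x => (χ i x : ℂ))
    (ofRealCLM.contDiff.comp (hχ i))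
    (HasCompactSupport.comp_left (isCompact_Icc.of_isClosed_subset (isClosed_tsupport _)
      ((hχU i).trans Ioo_subset_Icc_self)) ofReal_zero)
  set φi : T → ℝ → ℂ := fun i => φ ⋆[mul ℂ ℂ] ρ i
  have hφi : ∀ i, Integrable (φi i) := fun i => hφ.integrable_convolution _ (hρ i)
  have hFTφi : ∀ i η, FT (φi i) η = FT φ η * χ i η := fun i η => by
    rw [FT_convolution hφ (hρ i), hFTρ]
  have hφi_mem : ∀ i, φi i ∈ convAnnihilator h := fun i =>
    hann i (φi i) (hφi i) fun η hη => hχU i <| subset_tsupport _ <|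
      Function.mem_support.2 fun h0 => by simp [hFTφi, h0] at hη
  have hsum : Integrable (∑ i, φi i) := integrable_finsetSum' _ fun i _ => hφi i
  set r := φ - ∑ i, φi i with hr_def
  have hr : Integrable r := hφ.sub hsum
  have hFTr : ∀ η, FT r η = 0 := fun η => by
    rw [hr_def, FT_sub hφ hsum, FT_finset_sum _ fun i _ => hφi i]
    simp only [hFTφi, ← Finset.mul_sum]
    by_cases hη : η ∈ K
    · rw [← ofReal_sum, hχK η hη, ofReal_one, mul_one, sub_self]
    · simp [Function.notMem_support.1 fun h => hη (hsupp h)]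
  -- `FT r ≡ 0`, so `r` is annihilated as a spectral piece near any point of `K`.
  obtain ⟨k, hk⟩ := hKne
  have hr_mem : r ∈ convAnnihilator h := hann ⟨k, hk⟩ r hr (by simp [hFTr])
  rw [← sub_add_cancel φ (∑ i, φi i)]
  exact add_mem hr_mem (sum_mem fun i _ => hφi_mem i)

lemma tendsto_convolution_apply_of_tendstoUniformly {ι : Type*} {l : Filter ι} {φ : ℝ → ℂ}
    (hφ : Integrable φ) {F : ι → ℝ → X} {f : ℝ → X} {t : ℝ}
    (hF : ∀ᶠ i in l, ConvolutionExistsAt φ (F i) t (lsmul ℂ ℂ) volume)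
    (hf : ConvolutionExistsAt φ f t (lsmul ℂ ℂ) volume) (hFf : TendstoUniformly F f l) :
    Tendsto (fun i => (φ ⋆[lsmul ℂ ℂ] F i) t) l (𝓝 ((φ ⋆[lsmul ℂ ℂ] f) t)) := by
  rw [Metric.tendsto_nhds]
  intro ε hε
  set M := ∫ s, ‖φ s‖
  have hM : 0 ≤ M := integral_nonneg fun s => norm_nonneg _
  filter_upwards [Metric.tendstoUniformly_iff.1 hFf _ (div_pos hε (by linarith : 0 < M + 1)), hF]
    with i hFf_i hFi
  rw [dist_eq_norm, convolution_def, convolution_def, ← integral_sub hFi hf]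
  calc ‖∫ s, (lsmul ℂ ℂ (φ s) (F i (t - s)) - lsmul ℂ ℂ (φ s) (f (t - s)))‖
      ≤ ∫ s, ‖φ s‖ * (ε / (M + 1)) := by
        refine norm_integral_le_of_norm_le (hφ.norm.mul_const _) (ae_of_all _ fun s => ?_)
        rw [lsmul_apply, lsmul_apply, ← smul_sub, norm_smul, ← dist_eq_norm, dist_comm]
        exact mul_le_mul_of_nonneg_left (hFf_i _).le (norm_nonneg _)
    _ = M * (ε / (M + 1)) := integral_mul_const _ _
    _ < ε := by
        rw [mul_div_assoc', div_lt_iff₀ (by linarith)]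
        nlinarith

end Convolution

theorem stmt19_general {X : Type*} [NormedAddCommGroup X] [NormedSpace ℂ X]
    (Λ : Set ℝ) (gn : ℕ → ℝ → X) (g : ℝ → X)
    (hgn : ∀ n, BUCp (gn n)) (hg : BUCp g)
    (hsp : ∀ n, BeurlingSp (gn n) ⊆ Λ)
    (hconv : TendstoUniformly gn g atTop) :
    BeurlingSp g ⊆ closure Λ := by
  intro ξ hξ
  by_contra hξΛ
  obtain ⟨ε, hε, hball⟩ := Metric.isOpen_iff.1 isClosed_closure.isOpen_compl ξ hξΛ
  obtain ⟨φ, hφ, hsupp, hne⟩ := hξ (ε / 2) (half_pos hε)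
  have hK : ∀ n, Disjoint (Metric.closedBall ξ (ε / 2)) (BeurlingSp (gn n)) := fun n =>
    Disjoint.mono_left ((Metric.closedBall_subset_ball (half_lt_self hε)).trans hball)
      (disjoint_compl_left.mono_right ((hsp n).trans subset_closure))
  choose Cn hCn using fun n => (hgn n).2
  have hzero : ∀ n, φ ⋆[lsmul ℂ ℂ] gn n = 0 := fun n =>
    (mem_convAnnihilator_of_support_FT_subset (hgn n).1.continuous (hCn n)
      (isCompact_closedBall ξ _) (Metric.nonempty_closedBall.2 (half_pos hε).le) (hK n) hφ
      (hsupp.trans (Real.closedBall_eq_Icc ▸ Ioo_subset_Icc_self))).2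
  obtain ⟨hgc, C, hC⟩ := hg
  refine hne (funext fun t => tendsto_nhds_unique
    (tendsto_convolution_apply_of_tendstoUniformly hφ ?_ ?_ hconv) ?_)
  · exact .of_forall fun n => convolutionExists_of_bounded hφ (hgn n).1.continuous (hCn n) t
  · exact convolutionExists_of_bounded hφ hgc.continuous hC t
  · simpa only [hzero] using tendsto_const_nhds

/-- Stability of the Beurling spectrum under uniform limits: if `gₙ ∈ BUC(ℝ,X)` with
`sp(gₙ) ⊆ Λ` for all `n` and `gₙ → g` uniformly on `ℝ`, then `sp(g) ⊆ closure Λ`. -/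
theorem stmt19 {X : Type*} [NormedAddCommGroup X] [NormedSpace ℂ X] [CompleteSpace X]
    (Λ : Set ℝ) (gn : ℕ → ℝ → X) (g : ℝ → X)
    (hgn : ∀ n, BUCp (gn n)) (hg : BUCp g)
    (hsp : ∀ n, BeurlingSp (gn n) ⊆ Λ)
    (hconv : TendstoUniformly gn g atTop) :
    BeurlingSp g ⊆ closure Λ :=
  stmt19_general Λ gn g hgn hg hsp hconv
end
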